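/- Let A be a commutative Q-algebra which is an integral domain, and let D be a locally nilpotent derivation of A. Define the degree deg_D(a) = min{n : D^{n+1}(a) = 0} for a ≠ 0. Then for all a, b in A with a·b ≠ 0, deg_D(a·b) = deg_D(a) + deg_D(b). -/
import Mathlib

open Finset

private theorem lnd_iterate_leibniz {A : Type*} [CommRing A] [Algebra ℚ A]
    (D : Derivation ℚ A A) (n : ℕ) (p q : A) :
    (⇑D)^[n] (p * q) =
      ∑ k ∈ range n.succ, (n.choose k • ((⇑D)^[n - k] p * (⇑D)^[k] q)) := by
  induction n with
  | zero => simp [Finset.range]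
  | succ n IH =>
    calc
      (⇑D)^[n + 1] (p * q) =
          D (∑ k ∈ range n.succ,
              n.choose k • ((⇑D)^[n - k] p * (⇑D)^[k] q)) := by
        rw [Function.iterate_succ_apply', IH]
      _ = (∑ k ∈ range n.succ,
            n.choose k • ((⇑D)^[n - k + 1] p * (⇑D)^[k] q)) +
          ∑ k ∈ range n.succ,
            n.choose k • ((⇑D)^[n - k] p * (⇑D)^[k + 1] q) := by
        have hD : ∀ x y : A, D (x * y) = D x * y + x * D y := fun x y => by
          rw [D.leibniz, smul_eq_mul, smul_eq_mul]; ring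
        rw [map_sum]
        simp_rw [map_nsmul, hD, Function.iterate_succ_apply',
          smul_add, sum_add_distrib]
      _ = (∑ k ∈ range n.succ,
                n.choose k.succ • ((⇑D)^[n - k] p * (⇑D)^[k + 1] q)) +
              1 • ((⇑D)^[n + 1] p * (⇑D)^[0] q) +
            ∑ k ∈ range n.succ, n.choose k • ((⇑D)^[n - k] p * (⇑D)^[k + 1] q) :=
        ?_
      _ = (((∑ k ∈ range n.succ, n.choose k • ((⇑D)^[n - k] p * (⇑D)^[k + 1] q)) +
              ∑ k ∈ range n.succ,
                n.choose k.succ • ((⇑D)^[n - k] p * (⇑D)^[k + 1] q)) +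
            1 • ((⇑D)^[n + 1] p * (⇑D)^[0] q)) := by
        rw [add_comm, add_assoc]
      _ = (∑ i ∈ range n.succ,
              (n + 1).choose (i + 1) • ((⇑D)^[n + 1 - (i + 1)] p * (⇑D)^[i + 1] q)) +
            1 • ((⇑D)^[n + 1] p * (⇑D)^[0] q) := by
        simp_rw [Nat.choose_succ_succ, Nat.succ_sub_succ, add_smul, sum_add_distrib]
      _ = ∑ k ∈ range n.succ.succ,
            n.succ.choose k • ((⇑D)^[n.succ - k] p * (⇑D)^[k] q) := by
        rw [sum_range_succ' _ n.succ, Nat.choose_zero_right, tsub_zero]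
    congr
    refine (sum_range_succ' _ _).trans (congr_arg₂ (· + ·) ?_ ?_)
    · rw [sum_range_succ, Nat.choose_succ_self, zero_smul, add_zero]
      refine sum_congr rfl fun k hk => ?_
      rw [mem_range] at hk
      congr
      omega
    · rw [Nat.choose_zero_right, tsub_zero]

private theorem lnd_iterate_eq_zero {A : Type*} [CommRing A] [Algebra ℚ A]
    (D : Derivation ℚ A A) {a : A} {m : ℕ} (h : (⇑D)^[m] a = 0)
    {k : ℕ} (hk : m ≤ k) : (⇑D)^[k] a = 0 := by
  obtain ⟨j, rfl⟩ := Nat.exists_eq_add_of_le hk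
  rw [add_comm, Function.iterate_add_apply, h]
  induction j with
  | zero => simp
  | succ j IH => rw [Function.iterate_succ_apply', IH (by omega), map_zero]

/-- The degree with respect to a locally nilpotent derivation is additive on products
in an integral domain. -/
theorem lnd_degree_additive (A : Type*) [CommRing A] [IsDomain A] [Algebra ℚ A]
    (D : Derivation ℚ A A) (hln : ∀ a : A, ∃ n : ℕ, (⇑D)^[n] a = 0)
    (a b : A) (hab : a * b ≠ 0) (m n : ℕ)
    (ha : (⇑D)^[m + 1] a = 0 ∧ (⇑D)^[m] a ≠ 0)
    (hb : (⇑D)^[n + 1] b = 0 ∧ (⇑D)^[n] b ≠ 0) :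
    (⇑D)^[m + n + 1] (a * b) = 0 ∧ (⇑D)^[m + n] (a * b) ≠ 0 := by
  constructor
  · rw [lnd_iterate_leibniz]
    refine Finset.sum_eq_zero fun k hk => ?_
    rw [mem_range] at hk
    rcases le_or_gt (n + 1) k with h | h
    · rw [lnd_iterate_eq_zero D hb.1 h, mul_zero, smul_zero]
    · rw [lnd_iterate_eq_zero D ha.1 (by omega), zero_mul, smul_zero]
  · rw [lnd_iterate_leibniz]
    rw [Finset.sum_eq_single n]
    · have : m + n - n = m := by omega
      rw [this]
      have hch : ((m + n).choose n : A) ≠ 0 := by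
        have : ((m + n).choose n : ℚ) ≠ 0 := by
          exact_mod_cast Nat.choose_pos (by omega : n ≤ m + n) |>.ne'
        intro hc
        apply this
        have := (algebraMap ℚ A).injective
        apply this
        rw [map_natCast, map_zero]
        exact_mod_cast hc
      rw [nsmul_eq_mul]
      exact mul_ne_zero hch (mul_ne_zero ha.2 hb.2)
    · intro k hk hkn
      rw [mem_range] at hk
      rcases lt_or_gt_of_ne hkn with h | h
      · rw [lnd_iterate_eq_zero D ha.1 (by omega), zero_mul, smul_zero]
      · rw [lnd_iterate_eq_zero D hb.1 (by omega), mul_zero, smul_zero]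
    · intro h
      exact absurd (mem_range.mpr (by omega)) h
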